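/- arXiv:2007.12879 — 5 statements merged into one kernel-verified Lean document; each statement's English description precedes it below -/
import Mathlib

section
/- For each integer t ≥ 1, Σ_{x ∈ ℤ} P(x,t) = 1, where P(x,t) := |a(x,t)|². -/
open scoped BigOperators

noncomputable section

/-- Endpoint `x`-coordinate of a checker path of `n` steps encoded by step directions:
`true` = step `(1,1)`, `false` = step `(-1,1)`. -/
def endpt {n : ℕ} (d : Fin n → Bool) : ℤ :=
  ∑ i, (if d i then (1 : ℤ) else -1)

/-- The number of turns of a checker path encoded by step directions. -/
def turns {n : ℕ} (d : Fin n → Bool) : ℕ :=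
  ((Finset.range n).filter fun i =>
    ∃ h : i + 1 < n, d ⟨i, Nat.lt_of_succ_lt h⟩ ≠ d ⟨i + 1, h⟩).card

/-- Checker paths from `(0,0)` to `(x,n)` with the first step to `(1,1)`,
encoded by their step directions. -/
def pathsTo (x : ℤ) (n : ℕ) : Finset (Fin n → Bool) :=
  Finset.univ.filter fun d => (∃ h : 0 < n, d ⟨0, h⟩ = true) ∧ endpt d = x

/-- Feynman checkers with mass `m` and lattice step `ε`: the value `a(εx, εt, m, ε)`,
where `x t : ℤ` are the coordinates in units of `ε`. -/
def am (x t : ℤ) (m ε : ℝ) : ℂ :=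
  (1 + m ^ 2 * ε ^ 2 : ℂ) ^ ((1 - (t : ℂ)) / 2) * Complex.I *
    ∑ d ∈ pathsTo x t.toNat, (-Complex.I * (m * ε)) ^ turns d

/-- The basic model: `a(x,t)`. -/
def a (x t : ℤ) : ℂ :=
  (2 : ℂ) ^ ((1 - (t : ℂ)) / 2) * Complex.I *
    ∑ d ∈ pathsTo x t.toNat, (-Complex.I) ^ turns d

/-!
Split the amplitude according to the direction of the last step. Removing the last step of a
path gives the lattice Dirac equation
`A(n+1, x) = A(n, x-1) - i B(n, x-1)`, `B(n+1, x) = B(n, x+1) - i A(n, x+1)`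
for the sums `A`, `B` over paths ending with a right resp. left step. Since
`|z - i w|² + |w - i z|² = 2 (|z|² + |w|²)`, the total `∑ₓ |A|² + |B|²` doubles at each step,
and it is `1` at time `1`. By the same recurrence `A` is real and `B` is imaginary, so
`|A + B|² = |A|² + |B|²`, and the factor `2^((1-t)/2)` in `a` exactly compensates the growth.
-/

namespace FeynmanCheckers

open Finset Complex

lemma turns_eq_card {m : ℕ} (d : Fin (m + 1) → Bool) :
    turns d = #{i : Fin m | d i.castSucc ≠ d i.succ} := by
  rw [turns, card_filter, card_filter, sum_range_succ, Finset.sum_range]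
  simp [Fin.castSucc, Fin.succ, Fin.castAdd, Fin.castLE]

lemma turns_snoc {m : ℕ} (d : Fin (m + 1) → Bool) (b : Bool) :
    turns (Fin.snoc d b : Fin (m + 2) → Bool) = turns d + if d (Fin.last m) = b then 0 else 1 := by
  rw [turns_eq_card, turns_eq_card, card_filter, card_filter, Fin.sum_univ_castSucc]
  simp [Fin.succ_castSucc, -Fin.castSucc_succ]

lemma endpt_snoc {n : ℕ} (d : Fin n → Bool) (b : Bool) :
    endpt (Fin.snoc d b : Fin (n + 1) → Bool) = endpt d + if b then 1 else -1 := by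
  simp [endpt, Fin.sum_univ_castSucc]

lemma mem_pathsTo_succ {x : ℤ} {n : ℕ} {d : Fin (n + 1) → Bool} :
    d ∈ pathsTo x (n + 1) ↔ d 0 = true ∧ endpt d = x := by
  simp [pathsTo]

lemma snoc_mem_pathsTo_iff {x : ℤ} {n : ℕ} {d : Fin (n + 1) → Bool} {b : Bool} :
    (Fin.snoc d b : Fin (n + 2) → Bool) ∈ pathsTo x (n + 2) ↔
      d ∈ pathsTo (x - if b then 1 else -1) (n + 1) := by
  rw [mem_pathsTo_succ, mem_pathsTo_succ, endpt_snoc, eq_sub_iff_add_eq, ← Fin.castSucc_zero,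
    Fin.snoc_castSucc]

lemma pathsTo_one (x : ℤ) : pathsTo x 1 = if x = 1 then {fun _ => true} else ∅ := by
  ext d
  rw [mem_pathsTo_succ]
  have hd : d = (fun _ => true) ↔ d 0 = true := by simp [funext_iff, Fin.forall_fin_one]
  split_ifs with hx
  · simp [endpt, hd, hx]
  · simpa [endpt, hd] using fun h : d 0 = true => by simp [h, Ne.symm hx]

/-- The sum defining `a x (n + 1)`, restricted to paths whose last step is `b`. -/
def amp (n : ℕ) (b : Bool) (x : ℤ) : ℂ :=
  ∑ d ∈ pathsTo x (n + 1) with d (Fin.last n) = b, (-I) ^ turns d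

lemma filter_last_pathsTo (n : ℕ) (b : Bool) (x : ℤ) :
    {d ∈ pathsTo x (n + 2) | d (Fin.last (n + 1)) = b} =
      (pathsTo (x - if b then 1 else -1) (n + 1)).map
        ⟨(Fin.snoc · b), Fin.snoc_left_injective (α := fun _ => Bool) b⟩ := by
  ext d
  simp only [mem_filter, mem_map, Function.Embedding.coeFn_mk]
  constructor
  · rintro ⟨hd, rfl⟩
    refine ⟨Fin.init d, ?_, Fin.snoc_init_self d⟩
    rwa [← snoc_mem_pathsTo_iff, Fin.snoc_init_self]
  · rintro ⟨d, hd, rfl⟩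
    exact ⟨snoc_mem_pathsTo_iff.mpr hd, Fin.snoc_last _ _⟩

lemma amp_succ (n : ℕ) (b : Bool) (x : ℤ) :
    amp (n + 1) b x = amp n b (x - if b then 1 else -1) +
      -I * amp n (!b) (x - if b then 1 else -1) := by
  rw [amp, filter_last_pathsTo, sum_map, amp, amp, sum_filter, sum_filter, mul_sum,
    ← sum_add_distrib]
  refine sum_congr rfl fun d _ => ?_
  simp only [Function.Embedding.coeFn_mk, turns_snoc, pow_add]
  cases d (Fin.last n) <;> cases b <;> simp [mul_comm]

lemma amp_zero (b : Bool) (x : ℤ) : amp 0 b x = if b = true ∧ x = 1 then 1 else 0 := by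
  rw [amp, pathsTo_one]
  split_ifs <;> simp_all [turns_eq_card, filter_singleton]

lemma im_amp_true_and_re_amp_false : ∀ (n : ℕ) (x : ℤ),
    (amp n true x).im = 0 ∧ (amp n false x).re = 0
  | 0, x => by simp [amp_zero, apply_ite]
  | n + 1, x => by
    simp [amp_succ, (im_amp_true_and_re_amp_false n _).1, (im_amp_true_and_re_amp_false n _).2]

lemma support_amp_subset (n : ℕ) (b : Bool) :
    Function.support (amp n b) ⊆ Set.range (endpt (n := n + 1)) := by
  intro x hx
  obtain ⟨d, hd, -⟩ := exists_ne_zero_of_sum_ne_zero hx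
  exact ⟨d, (mem_pathsTo_succ.mp (mem_filter.mp hd).1).2⟩

lemma summable_sq_norm_amp (n : ℕ) (b : Bool) : Summable fun x => ‖amp n b x‖ ^ 2 :=
  summable_of_hasFiniteSupport <| (Set.finite_range _).subset fun x hx =>
    support_amp_subset n b (by simpa using hx)

lemma sq_norm_add_neg_I_mul_add (z w : ℂ) :
    ‖z + -I * w‖ ^ 2 + ‖w + -I * z‖ ^ 2 = 2 * (‖z‖ ^ 2 + ‖w‖ ^ 2) := by
  simp only [Complex.sq_norm, normSq_apply, add_re, add_im, mul_re, mul_im, neg_re, neg_im,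
    I_re, I_im]
  ring

lemma tsum_sq_norm_amp (n : ℕ) :
    ∑' x, (‖amp n true x‖ ^ 2 + ‖amp n false x‖ ^ 2) = 2 ^ n := by
  induction n with
  | zero => simp [amp_zero, apply_ite]
  | succ n ih =>
    have hT (y : ℤ) :
        ‖amp (n + 1) true (y + 1)‖ ^ 2 = ‖amp n true y + -I * amp n false y‖ ^ 2 := by
      simp [amp_succ]
    have hF (y : ℤ) :
        ‖amp (n + 1) false (y - 1)‖ ^ 2 = ‖amp n false y + -I * amp n true y‖ ^ 2 := by
      simp [amp_succ]
    calc ∑' x, (‖amp (n + 1) true x‖ ^ 2 + ‖amp (n + 1) false x‖ ^ 2)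
        = ∑' x, ‖amp (n + 1) true x‖ ^ 2 + ∑' x, ‖amp (n + 1) false x‖ ^ 2 :=
          (summable_sq_norm_amp _ _).tsum_add (summable_sq_norm_amp _ _)
      _ = ∑' y, ‖amp (n + 1) true (y + 1)‖ ^ 2 + ∑' y, ‖amp (n + 1) false (y - 1)‖ ^ 2 := by
          rw [← (Equiv.addRight 1).tsum_eq fun x => ‖amp (n + 1) true x‖ ^ 2,
            ← (Equiv.subRight 1).tsum_eq fun x => ‖amp (n + 1) false x‖ ^ 2]
          rfl
      _ = ∑' y, (‖amp (n + 1) true (y + 1)‖ ^ 2 + ‖amp (n + 1) false (y - 1)‖ ^ 2) :=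
          (Summable.tsum_add ((Equiv.addRight 1).summable_iff.mpr (summable_sq_norm_amp _ _))
            ((Equiv.subRight 1).summable_iff.mpr (summable_sq_norm_amp _ _))).symm
      _ = ∑' y, 2 * (‖amp n true y‖ ^ 2 + ‖amp n false y‖ ^ 2) := by
          simp only [hT, hF, sq_norm_add_neg_I_mul_add]
      _ = 2 ^ (n + 1) := by rw [tsum_mul_left, ih, pow_succ']

lemma sq_norm_a (x : ℤ) (n : ℕ) :
    ‖a x (n + 1)‖ ^ 2 = (‖amp n true x‖ ^ 2 + ‖amp n false x‖ ^ 2) / 2 ^ n := by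
  have hsplit : ∑ d ∈ pathsTo x (n + 1), (-I) ^ turns d = amp n true x + amp n false x := by
    simp only [amp, Bool.eq_false_iff, sum_filter_add_sum_filter_not]
  have hscale : ‖(2 : ℂ) ^ ((1 - ((n + 1 : ℤ) : ℂ)) / 2)‖ ^ 2 = (2 ^ n)⁻¹ := by
    rw [← ofReal_ofNat, norm_cpow_eq_rpow_re_of_pos two_pos, ← Real.rpow_natCast,
      ← Real.rpow_mul zero_le_two, ← Real.rpow_natCast, ← Real.rpow_neg zero_le_two]
    congr 1
    simp
  have horth : ‖amp n true x + amp n false x‖ ^ 2 = ‖amp n true x‖ ^ 2 + ‖amp n false x‖ ^ 2 := by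
    obtain ⟨h1, h2⟩ := im_amp_true_and_re_amp_false n x
    simp [Complex.sq_norm, normSq_apply, h1, h2]
  rw [a, show ((n + 1 : ℤ)).toNat = n + 1 by omega, hsplit, norm_mul, norm_mul, norm_I, mul_one,
    mul_pow, hscale, horth, inv_mul_eq_div]

end FeynmanCheckers

/-- Probability/charge conservation for the basic model. -/
theorem probability_conservation_basic (t : ℤ) (ht : 1 ≤ t) :
    ∑' x : ℤ, ‖a x t‖ ^ 2 = 1 := by
  obtain ⟨n, rfl⟩ : ∃ n : ℕ, t = n + 1 := ⟨(t - 1).toNat, by omega⟩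
  simp only [FeynmanCheckers.sq_norm_a, tsum_div_const, FeynmanCheckers.tsum_sq_norm_amp]
  exact div_self (pow_ne_zero n two_ne_zero)
end
end

section
/- For each integer x and each integer t ≥ 2, √2·a(x, t+1) + √2·a(x, t-1) − a(x-1, t) − a(x+1, t) = 0. -/
open scoped BigOperators

noncomputable section

namespace KGaux

open Finset

/-- `turns` as a sum of indicators. -/
lemma turns_eq_sum {n : ℕ} (d : Fin n → Bool) :
    turns d = ∑ i ∈ Finset.range n,
      (if h : i + 1 < n then (if d ⟨i, Nat.lt_of_succ_lt h⟩ ≠ d ⟨i + 1, h⟩ then 1 else 0)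
        else 0) := by
  rw [turns, Finset.card_filter]
  refine Finset.sum_congr rfl fun i _ => ?_
  by_cases h : i + 1 < n
  · rw [dif_pos h]
    by_cases hd : d ⟨i, Nat.lt_of_succ_lt h⟩ ≠ d ⟨i + 1, h⟩
    · rw [if_pos ⟨h, hd⟩, if_pos hd]
    · rw [if_neg, if_neg hd]
      rintro ⟨h', hd'⟩
      exact hd hd'
  · rw [dif_neg h, if_neg]
    rintro ⟨h', _⟩
    exact h h'

lemma endpt_snoc {n : ℕ} (e : Fin n → Bool) (b : Bool) :
    endpt (Fin.snoc e b) = endpt e + (if b then 1 else -1) := by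
  unfold endpt
  rw [Fin.sum_univ_castSucc]
  simp

lemma turns_snoc {n : ℕ} (e : Fin (n + 1) → Bool) (b : Bool) :
    turns (Fin.snoc e b : Fin (n + 2) → Bool)
      = turns e + (if e (Fin.last n) ≠ b then 1 else 0) := by
  rw [turns_eq_sum, turns_eq_sum, Finset.sum_range_succ, Finset.sum_range_succ (n := n),
    Finset.sum_range_succ (n := n)]
  have h1 : ∀ i ∈ Finset.range n,
      (if h : i + 1 < n + 2 then
        (if (Fin.snoc e b : Fin (n+2) → Bool) ⟨i, Nat.lt_of_succ_lt h⟩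
            ≠ (Fin.snoc e b : Fin (n+2) → Bool) ⟨i + 1, h⟩ then 1 else 0) else 0)
      = (if h : i + 1 < n + 1 then
        (if e ⟨i, Nat.lt_of_succ_lt h⟩ ≠ e ⟨i + 1, h⟩ then 1 else 0) else 0) := by
    intro i hi
    rw [Finset.mem_range] at hi
    rw [dif_pos (by omega), dif_pos (by omega)]
    have e1 : (⟨i, by omega⟩ : Fin (n+2)) = Fin.castSucc ⟨i, by omega⟩ := rfl
    have e2 : (⟨i + 1, by omega⟩ : Fin (n+2)) = Fin.castSucc ⟨i + 1, by omega⟩ := rfl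
    rw [e1, e2, Fin.snoc_castSucc, Fin.snoc_castSucc]
  rw [Finset.sum_congr rfl h1]
  have h2 : (if h : n + 1 < n + 2 then
      (if (Fin.snoc e b : Fin (n+2) → Bool) ⟨n, Nat.lt_of_succ_lt h⟩
          ≠ (Fin.snoc e b : Fin (n+2) → Bool) ⟨n + 1, h⟩ then 1 else 0) else 0)
      = (if e (Fin.last n) ≠ b then 1 else 0) := by
    rw [dif_pos (by omega)]
    have e1 : (⟨n, by omega⟩ : Fin (n+2)) = Fin.castSucc (Fin.last n) := rfl
    have e2 : (⟨n + 1, by omega⟩ : Fin (n+2)) = Fin.last (n+1) := rfl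
    rw [e1, e2, Fin.snoc_castSucc, Fin.snoc_last]
  rw [h2]
  have h3 : (if h : n + 1 + 1 < n + 2 then
      (if (Fin.snoc e b : Fin (n+2) → Bool) ⟨n+1, Nat.lt_of_succ_lt h⟩
          ≠ (Fin.snoc e b : Fin (n+2) → Bool) ⟨n + 1 + 1, h⟩ then 1 else 0) else 0) = 0 := by
    rw [dif_neg (by omega)]
  have h4 : (if h : n + 1 < n + 1 then
      (if e ⟨n, Nat.lt_of_succ_lt h⟩ ≠ e ⟨n + 1, h⟩ then 1 else 0) else 0) = 0 := by
    rw [dif_neg (by omega)]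
  rw [h3, h4]
  ring

lemma mem_pathsTo {x : ℤ} {n : ℕ} {d : Fin (n + 1) → Bool} :
    d ∈ pathsTo x (n + 1) ↔ d ⟨0, Nat.succ_pos n⟩ = true ∧ endpt d = x := by
  rw [pathsTo, Finset.mem_filter]
  constructor
  · rintro ⟨-, ⟨h, h0⟩, he⟩
    exact ⟨h0, he⟩
  · rintro ⟨h0, he⟩
    exact ⟨Finset.mem_univ _, ⟨Nat.succ_pos n, h0⟩, he⟩

/-- Sum over paths of length `n+2` with prescribed last step, as a sum over
paths of length `n+1`. -/
lemma sum_filter_last (x : ℤ) (n : ℕ) (b : Bool) (f : (Fin (n + 2) → Bool) → ℂ) :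
    ∑ d ∈ (pathsTo x (n + 2)).filter (fun d => d (Fin.last (n + 1)) = b), f d
      = ∑ e ∈ pathsTo (x - (if b then 1 else -1)) (n + 1), f (Fin.snoc e b) := by
  refine Finset.sum_nbij' Fin.init (fun e => Fin.snoc e b) ?_ ?_ ?_ ?_ ?_
  · intro d hd
    rw [Finset.mem_filter] at hd
    obtain ⟨hd, hlast⟩ := hd
    rw [mem_pathsTo] at hd
    obtain ⟨h0, he⟩ := hd
    rw [mem_pathsTo]
    constructor
    · exact h0
    · show endpt (Fin.init d) = x - (if b then 1 else -1)
      have hsnoc : d = Fin.snoc (Fin.init d) (d (Fin.last (n + 1))) := (Fin.snoc_init_self d).symm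
      have h2 := endpt_snoc (Fin.init d) (d (Fin.last (n + 1)))
      rw [← hsnoc, hlast] at h2
      omega
  · intro e he
    rw [mem_pathsTo] at he
    obtain ⟨h0, hee⟩ := he
    rw [Finset.mem_filter, mem_pathsTo]
    refine ⟨⟨?_, ?_⟩, ?_⟩
    · show (Fin.snoc e b : Fin (n + 2) → Bool) ⟨0, Nat.succ_pos (n + 1)⟩ = true
      have e1 : (⟨0, Nat.succ_pos (n + 1)⟩ : Fin (n + 2))
          = Fin.castSucc ⟨0, Nat.succ_pos n⟩ := rfl
      rw [e1, Fin.snoc_castSucc, h0]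
    · show endpt (Fin.snoc e b : Fin (n + 2) → Bool) = x
      rw [endpt_snoc, hee]
      ring
    · show (Fin.snoc e b : Fin (n + 2) → Bool) (Fin.last (n + 1)) = b
      exact Fin.snoc_last _ _
  · intro d hd
    rw [Finset.mem_filter] at hd
    show Fin.snoc (Fin.init d) b = d
    rw [← hd.2]
    exact Fin.snoc_init_self d
  · intro e _
    have h : Fin.init (Fin.snoc e b : Fin (n + 2) → Bool) = e := by
      funext i
      show (Fin.snoc e b : Fin (n + 2) → Bool) i.castSucc = e i
      rw [Fin.snoc_castSucc]
    exact h
  · intro d hd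
    rw [Finset.mem_filter] at hd
    conv_lhs => rw [← Fin.snoc_init_self d, hd.2]

/-- The full path sum. -/
def S (x : ℤ) (n : ℕ) : ℂ := ∑ d ∈ pathsTo x n, (-Complex.I) ^ turns d

lemma S_def (x : ℤ) (n : ℕ) :
    ∑ d ∈ pathsTo x n, (-Complex.I) ^ turns d = S x n := rfl

/-- Path sum over paths of length `n+1` ending with a `(1,1)` step. -/
def SR (x : ℤ) (n : ℕ) : ℂ :=
  ∑ d ∈ (pathsTo x (n + 1)).filter (fun d => d (Fin.last n) = true), (-Complex.I) ^ turns d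

/-- Path sum over paths of length `n+1` ending with a `(-1,1)` step. -/
def SL (x : ℤ) (n : ℕ) : ℂ :=
  ∑ d ∈ (pathsTo x (n + 1)).filter (fun d => d (Fin.last n) = false), (-Complex.I) ^ turns d

lemma filter_false_eq {n : ℕ} (s : Finset (Fin (n + 1) → Bool)) (b : Bool) :
    s.filter (fun d => ¬ d (Fin.last n) = b) = s.filter (fun d => d (Fin.last n) = !b) := by
  ext d
  simp only [Finset.mem_filter]
  cases b <;> simp

lemma S_eq (x : ℤ) (n : ℕ) : S x (n + 1) = SR x n + SL x n := by
  rw [S, SR, SL, ← Finset.sum_filter_add_sum_filter_not (pathsTo x (n + 1))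
    (fun d => d (Fin.last n) = true), filter_false_eq]
  simp only [Bool.not_true]

lemma snoc_sum (x : ℤ) (n : ℕ) (b : Bool) :
    ∑ d ∈ (pathsTo x (n + 2)).filter (fun d => d (Fin.last (n + 1)) = b),
        (-Complex.I) ^ turns d
      = (∑ e ∈ (pathsTo (x - (if b then 1 else -1)) (n + 1)).filter
            (fun e => e (Fin.last n) = b), (-Complex.I) ^ turns e)
        + (-Complex.I) * ∑ e ∈ (pathsTo (x - (if b then 1 else -1)) (n + 1)).filter
            (fun e => e (Fin.last n) = !b), (-Complex.I) ^ turns e := by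
  rw [sum_filter_last]
  rw [← Finset.sum_filter_add_sum_filter_not (pathsTo (x - (if b then 1 else -1)) (n + 1))
    (fun e => e (Fin.last n) = b), filter_false_eq]
  rw [Finset.mul_sum]
  congr 1
  · refine Finset.sum_congr rfl fun e he => ?_
    rw [Finset.mem_filter] at he
    rw [turns_snoc, if_neg (by simp [he.2]), pow_add]
    ring
  · refine Finset.sum_congr rfl fun e he => ?_
    rw [Finset.mem_filter] at he
    have hne : e (Fin.last n) ≠ b := by rw [he.2]; cases b <;> simp
    rw [turns_snoc, if_pos hne, pow_add]
    ring

lemma SR_succ (x : ℤ) (n : ℕ) :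
    SR x (n + 1) = SR (x - 1) n + (-Complex.I) * SL (x - 1) n := by
  rw [SR, SR, SL]
  simpa using snoc_sum x n true

lemma SL_succ (x : ℤ) (n : ℕ) :
    SL x (n + 1) = SL (x + 1) n + (-Complex.I) * SR (x + 1) n := by
  rw [SL, SL, SR]
  have := snoc_sum x n false
  simp only [if_neg Bool.false_ne_true, Bool.not_false] at this
  have hx : x - (-1) = x + 1 := by ring
  rw [hx] at this
  exact this

/-- The combinatorial heart of the Klein–Gordon equation. -/
lemma S_recurrence (x : ℤ) (m : ℕ) :
    S x (m + 3) + 2 * S x (m + 1) = S (x - 1) (m + 2) + S (x + 1) (m + 2) := by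
  have h1 : S x (m + 3) = SR x (m + 2) + SL x (m + 2) := S_eq x (m + 2)
  have h2 : S x (m + 1) = SR x m + SL x m := S_eq x m
  have h3 : S (x - 1) (m + 2) = SR (x - 1) (m + 1) + SL (x - 1) (m + 1) := S_eq _ _
  have h4 : S (x + 1) (m + 2) = SR (x + 1) (m + 1) + SL (x + 1) (m + 1) := S_eq _ _
  have h5 := SR_succ x (m + 1)
  have h6 := SL_succ x (m + 1)
  have h7 := SL_succ (x - 1) m
  have h8 := SR_succ (x + 1) m
  have hx1 : x - 1 + 1 = x := by ring
  have hx2 : x + 1 - 1 = x := by ring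
  rw [hx1] at h7
  rw [hx2] at h8
  have hI : Complex.I ^ 2 = -1 := Complex.I_sq
  rw [h1, h2, h3, h4, h5, h6, h7, h8]
  ring_nf
  rw [Complex.I_sq]
  ring

end KGaux

/-- Klein–Gordon equation for the basic model. -/
theorem klein_gordon_basic (x t : ℤ) (ht : 2 ≤ t) :
    (Real.sqrt 2 : ℂ) * a x (t + 1) + (Real.sqrt 2 : ℂ) * a x (t - 1)
      - a (x - 1) t - a (x + 1) t = 0 := by
  obtain ⟨m, hm⟩ : ∃ m : ℕ, t = (m : ℤ) + 2 := ⟨(t - 2).toNat, by omega⟩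
  subst hm
  have h1 : ((m : ℤ) + 2 + 1).toNat = m + 3 := by omega
  have h2 : ((m : ℤ) + 2).toNat = m + 2 := by omega
  have h3 : ((m : ℤ) + 2 - 1).toNat = m + 1 := by omega
  have hs : (Real.sqrt 2 : ℂ) = (2 : ℂ) ^ ((1 : ℂ) / 2) := by
    rw [show (2 : ℝ) = ((2 : ℝ)) from rfl, Real.sqrt_eq_rpow,
      Complex.ofReal_cpow (by norm_num)]
    norm_num
  have h2ne : (2 : ℂ) ≠ 0 := by norm_num
  have hp1 : (Real.sqrt 2 : ℂ) * (2 : ℂ) ^ ((1 - ((((m : ℤ) + 2 + 1) : ℤ) : ℂ)) / 2)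
      = (2 : ℂ) ^ ((1 - ((((m : ℤ) + 2) : ℤ) : ℂ)) / 2) := by
    rw [hs, ← Complex.cpow_add _ _ h2ne]
    rw [show (1 : ℂ) / 2 + (1 - ((((m : ℤ) + 2 + 1) : ℤ) : ℂ)) / 2
        = (1 - ((((m : ℤ) + 2) : ℤ) : ℂ)) / 2 by push_cast; ring]
  have hp2 : (Real.sqrt 2 : ℂ) * (2 : ℂ) ^ ((1 - ((((m : ℤ) + 2 - 1) : ℤ) : ℂ)) / 2)
      = 2 * (2 : ℂ) ^ ((1 - ((((m : ℤ) + 2) : ℤ) : ℂ)) / 2) := by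
    rw [hs, ← Complex.cpow_add _ _ h2ne]
    rw [show (1 : ℂ) / 2 + (1 - ((((m : ℤ) + 2 - 1) : ℤ) : ℂ)) / 2
        = (1 - ((((m : ℤ) + 2) : ℤ) : ℂ)) / 2 + 1 by push_cast; ring]
    rw [Complex.cpow_add _ _ h2ne, Complex.cpow_one]
    ring
  rw [a, a, a, a, h1, h2, h3]
  simp only [KGaux.S_def]
  have key := KGaux.S_recurrence x m
  linear_combination (Complex.I * KGaux.S x (m + 3)) * hp1
    + (Complex.I * KGaux.S x (m + 1)) * hp2
    + ((2 : ℂ) ^ ((1 - ((((m : ℤ) + 2) : ℤ) : ℂ)) / 2) * Complex.I) * key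
end
end

section
/- For all integers x and t with |x| < t and x + t even: a1(x,t) = 2^((1-t)/2) · Σ_{r=0}^{(t-|x|)/2} (−1)^r · C((x+t-2)/2, r) · C((t-x-2)/2, r), and a2(x,t) = 2^((1-t)/2) · Σ_{r=1}^{(t-|x|)/2} (−1)^r · C((x+t-2)/2, r) · C((t-x-2)/2, r−1), where C(n,k) denotes the binomial coefficient (with C(n,k) := 0 if k < 0 or k > n). -/
open scoped BigOperators

noncomputable section

/-- Binomial coefficient with integer arguments, set to 0 if k < 0 or k > n. -/
def intChoose (n k : ℤ) : ℝ :=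
  if 0 ≤ k ∧ k ≤ n then (n.toNat.choose k.toNat : ℝ) else 0

lemma intChoose_nat (m r : ℕ) : intChoose m r = m.choose r := by
  simp only [intChoose, Int.toNat_natCast]
  split_ifs with h
  · rfl
  · rw [Nat.choose_eq_zero_of_lt]; · simp
    omega

lemma intChoose_neg_right {n k : ℤ} (h : k < 0) : intChoose n k = 0 := by
  simp [intChoose]; omega

lemma intChoose_neg_left {n k : ℤ} (h : n < 0) : intChoose n k = 0 := by
  simp only [intChoose, ite_eq_right_iff]; intro hh; omega

lemma intChoose_gt {n k : ℤ} (h : n < k) : intChoose n k = 0 := by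
  simp only [intChoose, ite_eq_right_iff]; intro hh; omega

lemma intChoose_pascal (m r : ℕ) :
    intChoose ((m:ℤ) + 1) r = intChoose m r + intChoose m ((r:ℤ) - 1) := by
  cases r with
  | zero =>
    have h1 : ((m:ℤ) + 1) = ((m+1 : ℕ) : ℤ) := by push_cast; ring
    rw [h1]
    rw [show ((0:ℕ):ℤ) = ((0:ℕ):ℤ) from rfl, intChoose_nat, intChoose_nat]
    rw [intChoose_neg_right (by norm_num)]
    simp
  | succ s =>
    have h1 : ((m:ℤ) + 1) = ((m+1 : ℕ) : ℤ) := by push_cast; ring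
    have h2 : ((s+1 : ℕ) : ℤ) - 1 = (s : ℤ) := by push_cast; ring
    rw [h1, h2, intChoose_nat, intChoose_nat, intChoose_nat, Nat.choose_succ_succ]
    push_cast; ring

def OO (p q : ℕ) : ℝ :=
  ∑ r ∈ Finset.range (q+1), (-1:ℝ)^r * intChoose ((p:ℤ)-1) r * intChoose ((q:ℤ)-1) r

def EE (p q : ℕ) : ℝ :=
  ∑ r ∈ Finset.range (q+1), (-1:ℝ)^r * intChoose ((p:ℤ)-1) r * intChoose ((q:ℤ)-1) ((r:ℤ)-1)

def TT (p q : ℕ) : ℝ := EE p q + (if q = 0 ∧ 1 ≤ p then 1 else 0)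

lemma OO_zero_left (q : ℕ) : OO 0 q = 0 := by
  unfold OO
  refine Finset.sum_eq_zero fun r _ => ?_
  rw [intChoose_neg_left (by norm_num)]; ring

lemma EE_zero_left (q : ℕ) : EE 0 q = 0 := by
  unfold EE
  refine Finset.sum_eq_zero fun r _ => ?_
  rw [intChoose_neg_left (by norm_num)]; ring

lemma EE_zero_right (p : ℕ) : EE p 0 = 0 := by
  unfold EE
  refine Finset.sum_eq_zero fun r hr => ?_
  rcases Nat.eq_zero_or_pos r with h | h
  · subst h; rw [intChoose_neg_right (k := ((0:ℕ):ℤ)-1) (by norm_num)]; ring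
  · rw [intChoose_gt (n := ((0:ℕ):ℤ)-1) (by push_cast; omega)]; ring

lemma OO_zero_right (p : ℕ) : OO p 0 = 0 := by
  unfold OO
  refine Finset.sum_eq_zero fun r hr => ?_
  rw [intChoose_neg_left (n := ((0:ℕ):ℤ)-1) (by norm_num)]; ring

lemma lemA (p q : ℕ) (h : 1 ≤ p + q) : TT (p+1) q = TT p q - OO p q := by
  rcases Nat.eq_zero_or_pos q with hq | hq
  · subst hq
    rw [TT, TT, EE_zero_right, EE_zero_right, OO_zero_right]
    have hp : 1 ≤ p := by omega
    simp [hp]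
  rcases Nat.eq_zero_or_pos p with hp | hp
  · subst hp
    rw [TT, TT, EE_zero_left, OO_zero_left]
    have : EE 1 q = 0 := by
      unfold EE
      refine Finset.sum_eq_zero fun r hr => ?_
      rcases Nat.eq_zero_or_pos r with h0 | h0
      · subst h0; rw [intChoose_neg_right (k := ((0:ℕ):ℤ)-1) (by norm_num)]; ring
      · rw [intChoose_gt (n := ((1:ℕ):ℤ)-1) (k := (r:ℤ)) (by push_cast; omega)]; ring
    rw [this]
    have : ¬ q = 0 := by omega
    simp [this]
  -- main case p ≥ 1, q ≥ 1
  have hq0 : ¬ (q = 0 ∧ 1 ≤ p + 1) := by omega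
  have hq0' : ¬ (q = 0 ∧ 1 ≤ p) := by omega
  rw [TT, TT, if_neg hq0, if_neg hq0', add_zero, add_zero]
  obtain ⟨m, rfl⟩ : ∃ m, p = m + 1 := ⟨p - 1, by omega⟩
  have expand : EE (m+1+1) q = EE (m+1) q +
      ∑ r ∈ Finset.range (q+1), (-1:ℝ)^r * intChoose ((m:ℤ)) ((r:ℤ)-1) * intChoose ((q:ℤ)-1) ((r:ℤ)-1) := by
    rw [EE, EE, ← Finset.sum_add_distrib]
    refine Finset.sum_congr rfl fun r _ => ?_
    have : ((m+1+1 : ℕ) : ℤ) - 1 = (m:ℤ) + 1 := by push_cast; ring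
    rw [this, intChoose_pascal]
    have : ((m+1 : ℕ) : ℤ) - 1 = (m:ℤ) := by push_cast; ring
    rw [this]; ring
  rw [expand]
  have hS : ∑ r ∈ Finset.range (q+1), (-1:ℝ)^r * intChoose ((m:ℤ)) ((r:ℤ)-1) * intChoose ((q:ℤ)-1) ((r:ℤ)-1)
      = - OO (m+1) q := by
    rw [Finset.sum_range_succ' (fun r => (-1:ℝ)^r * intChoose ((m:ℤ)) ((r:ℤ)-1) * intChoose ((q:ℤ)-1) ((r:ℤ)-1)) q]
    rw [intChoose_neg_right (k := ((0:ℕ):ℤ)-1) (by norm_num)]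
    rw [OO, Finset.sum_range_succ]
    rw [intChoose_gt (n := ((q:ℕ):ℤ)-1) (k := ((q:ℕ):ℤ)) (by omega)]
    rw [mul_zero, zero_mul, mul_zero, add_zero, add_zero, neg_eq_iff_eq_neg.symm, ← Finset.sum_neg_distrib]
    refine Finset.sum_congr rfl fun i _ => ?_
    have h1 : ((i+1 : ℕ) : ℤ) - 1 = (i:ℤ) := by push_cast; ring
    have h2 : ((m+1 : ℕ) : ℤ) - 1 = (m:ℤ) := by push_cast; ring
    rw [h1, h2, pow_succ]
    ring
  rw [hS]; ring

lemma lemB (p q : ℕ) : OO p (q+1) = TT p q + OO p q := by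
  rcases Nat.eq_zero_or_pos q with hq | hq
  · subst hq
    rw [OO, TT, EE_zero_right, OO_zero_right, zero_add, add_zero]
    rw [Finset.sum_range_succ, Finset.sum_range_succ, Finset.sum_range_zero]
    rw [intChoose_gt (n := ((1:ℕ):ℤ)-1) (k := ((1:ℕ):ℤ)) (by norm_num)]
    rcases Nat.eq_zero_or_pos p with hp | hp
    · subst hp
      rw [intChoose_neg_left (n := ((0:ℕ):ℤ)-1) (by norm_num)]
      norm_num
    · have h2 : ((p:ℤ)-1) = ((p-1 : ℕ) : ℤ) := by push_cast [hp]; omega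
      rw [h2, intChoose_nat, intChoose_nat]
      have : 1 ≤ p := hp
      simp [this, intChoose]
  · obtain ⟨m, rfl⟩ : ∃ m, q = m + 1 := ⟨q - 1, by omega⟩
    rw [TT, if_neg (by omega), add_zero]
    have expand : OO p (m+1+1) = (∑ r ∈ Finset.range (m+2+1), (-1:ℝ)^r * intChoose ((p:ℤ)-1) r * intChoose ((m:ℤ)) r)
        + ∑ r ∈ Finset.range (m+2+1), (-1:ℝ)^r * intChoose ((p:ℤ)-1) r * intChoose ((m:ℤ)) ((r:ℤ)-1) := by
      rw [OO, ← Finset.sum_add_distrib]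
      refine Finset.sum_congr rfl fun r _ => ?_
      have : ((m+1+1 : ℕ) : ℤ) - 1 = (m:ℤ) + 1 := by push_cast; ring
      rw [this, intChoose_pascal]; ring
    rw [expand]
    have e1 : (∑ r ∈ Finset.range (m+2+1), (-1:ℝ)^r * intChoose ((p:ℤ)-1) r * intChoose ((m:ℤ)) r) = OO p (m+1) := by
      rw [Finset.sum_range_succ, OO]
      rw [intChoose_gt (n := (m:ℤ)) (k := ((m+2:ℕ):ℤ)) (by push_cast; omega), mul_zero, add_zero]
      refine Finset.sum_congr rfl fun r _ => ?_
      have : ((m+1 : ℕ) : ℤ) - 1 = (m:ℤ) := by push_cast; ring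
      rw [this]
    have e2 : (∑ r ∈ Finset.range (m+2+1), (-1:ℝ)^r * intChoose ((p:ℤ)-1) r * intChoose ((m:ℤ)) ((r:ℤ)-1)) = EE p (m+1) := by
      rw [Finset.sum_range_succ, EE]
      rw [intChoose_gt (n := (m:ℤ)) (k := ((m+2:ℕ):ℤ)-1) (by push_cast; omega), mul_zero, add_zero]
      refine Finset.sum_congr rfl fun r _ => ?_
      have : ((m+1 : ℕ) : ℤ) - 1 = (m:ℤ) := by push_cast; ring
      rw [this]
    rw [e1, e2]; ring

lemma endpt_snoc {n : ℕ} (e : Fin n → Bool) (b : Bool) :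
    endpt (Fin.snoc e b) = endpt e + (if b then 1 else -1) := by
  unfold endpt
  rw [Fin.sum_univ_castSucc]
  simp [Fin.snoc_castSucc, Fin.snoc_last]

lemma turns_eq_sum {n : ℕ} (d : Fin n → Bool) :
    turns d = ∑ i ∈ Finset.range n,
      (if ∃ h : i + 1 < n, d ⟨i, Nat.lt_of_succ_lt h⟩ ≠ d ⟨i + 1, h⟩ then 1 else 0) := by
  rw [turns, Finset.card_filter]

lemma turns_snoc {m : ℕ} (e : Fin (m+1) → Bool) (b : Bool) :
    turns (Fin.snoc e b) = turns e + (if e (Fin.last m) = b then 0 else 1) := by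
  rw [turns_eq_sum, turns_eq_sum]
  rw [Finset.sum_range_succ]
  have hlast : ¬ ∃ h : (m+1) + 1 < m + 2, (Fin.snoc e b : Fin (m+2) → Bool) ⟨m+1, Nat.lt_of_succ_lt h⟩ ≠ (Fin.snoc e b : Fin (m+2) → Bool) ⟨m+2, h⟩ := by
    rintro ⟨h, -⟩; omega
  have hlast2 : ¬ ∃ h : m + 1 < m + 1, e ⟨m, Nat.lt_of_succ_lt h⟩ ≠ e ⟨m+1, h⟩ := by
    rintro ⟨h, -⟩; omega
  rw [if_neg hlast, add_zero]
  rw [Finset.sum_range_succ]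
  have hmid : (if ∃ h : m + 1 < m + 2, (Fin.snoc e b : Fin (m+2) → Bool) ⟨m, Nat.lt_of_succ_lt h⟩ ≠ (Fin.snoc e b : Fin (m+2) → Bool) ⟨m+1, h⟩ then 1 else 0)
      = (if e (Fin.last m) = b then 0 else 1) := by
    have h1 : (⟨m, by omega⟩ : Fin (m+2)) = Fin.castSucc (Fin.last m) := rfl
    have h2 : (⟨m+1, by omega⟩ : Fin (m+2)) = Fin.last (m+1) := rfl
    by_cases hb : e (Fin.last m) = b
    · rw [if_pos hb, if_neg]
      rintro ⟨h, hne⟩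
      apply hne
      rw [h1, h2, Fin.snoc_castSucc, Fin.snoc_last, hb]
    · rw [if_neg hb, if_pos]
      exact ⟨by omega, by rw [h1, h2, Fin.snoc_castSucc, Fin.snoc_last]; exact hb⟩
  rw [hmid]
  conv_rhs => rw [Finset.sum_range_succ]
  rw [if_neg hlast2, add_zero]
  congr 1
  refine Finset.sum_congr rfl fun i hi => ?_
  have hi' : i < m := Finset.mem_range.mp hi
  have hA : ∃ h : i + 1 < m + 2, True := ⟨by omega, trivial⟩
  have e1 : (⟨i, by omega⟩ : Fin (m+2)) = Fin.castSucc ⟨i, by omega⟩ := rfl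
  have e2 : (⟨i+1, by omega⟩ : Fin (m+2)) = Fin.castSucc ⟨i+1, by omega⟩ := rfl
  by_cases hne : e ⟨i, by omega⟩ ≠ e ⟨i+1, by omega⟩
  · have hp1 : i + 1 < m + 2 := by omega
    have hp2 : i + 1 < m + 1 := by omega
    have hs : ∃ h : i + 1 < m + 2, (Fin.snoc e b : Fin (m+2) → Bool) ⟨i, Nat.lt_of_succ_lt h⟩ ≠ (Fin.snoc e b : Fin (m+2) → Bool) ⟨i+1, h⟩ :=
      ⟨hp1, by rw [e1, e2, Fin.snoc_castSucc, Fin.snoc_castSucc]; exact hne⟩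
    have hs2 : ∃ h : i + 1 < m + 1, e ⟨i, Nat.lt_of_succ_lt h⟩ ≠ e ⟨i+1, h⟩ := ⟨hp2, hne⟩
    rw [if_pos hs, if_pos hs2]
  · rw [if_neg, if_neg]
    · rintro ⟨h, hk⟩; exact hne hk
    · rintro ⟨h, hk⟩
      apply hne
      rw [e1, e2, Fin.snoc_castSucc, Fin.snoc_castSucc] at hk
      exact hk

def pend (x : ℤ) (n : ℕ) (b : Bool) : Finset (Fin (n+1) → Bool) :=
  Finset.univ.filter fun d => d 0 = true ∧ d (Fin.last n) = b ∧ endpt d = x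

lemma mem_pend {x : ℤ} {n : ℕ} {b : Bool} {d : Fin (n+1) → Bool} :
    d ∈ pend x n b ↔ d 0 = true ∧ d (Fin.last n) = b ∧ endpt d = x := by
  simp [pend]

lemma mem_pathsTo {x : ℤ} {n : ℕ} {d : Fin n → Bool} :
    d ∈ pathsTo x n ↔ (∃ h : 0 < n, d ⟨0, h⟩ = true) ∧ endpt d = x := by
  simp [pathsTo]

lemma sum_pathsTo (x : ℤ) (n : ℕ) (f : (Fin (n+1) → Bool) → ℂ) :
    ∑ d ∈ pathsTo x (n+1), f d = ∑ d ∈ pend x n true, f d + ∑ d ∈ pend x n false, f d := by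
  rw [pathsTo, pend, pend, Finset.sum_filter, Finset.sum_filter, Finset.sum_filter,
    ← Finset.sum_add_distrib]
  refine Finset.sum_congr rfl fun d _ => ?_
  by_cases h1 : d 0 = true
  · by_cases h2 : endpt d = x
    · cases hl : d (Fin.last n) <;> simp [h1, h2, hl, Fin.mk_zero, Nat.succ_pos]
    · simp [h1, h2, Fin.mk_zero]
  · simp [h1, Fin.mk_zero, Nat.succ_pos]

lemma sum_pend_succ (n : ℕ) (x : ℤ) (b : Bool) :
    ∑ d ∈ pend x (n+1) b, (-Complex.I)^turns d
    = ∑ e ∈ pend (x - (if b then 1 else -1)) n b, (-Complex.I)^turns e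
      + (-Complex.I) * ∑ e ∈ pend (x - (if b then 1 else -1)) n (!b), (-Complex.I)^turns e := by
  have step1 : ∑ d ∈ pend x (n+1) b, (-Complex.I)^turns d
      = ∑ e ∈ pathsTo (x - (if b then 1 else -1)) (n+1),
          (-Complex.I)^(turns (Fin.snoc e b : Fin (n+1+1) → Bool)) := by
    refine Finset.sum_nbij' (fun d => Fin.init d) (fun e => Fin.snoc e b) ?_ ?_ ?_ ?_ ?_
    · intro d hd
      rw [mem_pend] at hd
      obtain ⟨h0, hl, he⟩ := hd
      have hself : (Fin.snoc (Fin.init d) b : Fin (n+1+1) → Bool) = d := by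
        rw [← hl]; exact Fin.snoc_init_self d
      rw [mem_pathsTo]
      constructor
      · refine ⟨Nat.succ_pos n, ?_⟩
        show Fin.init d 0 = true
        rw [Fin.init]
        simpa using h0
      · show endpt (Fin.init d) = x - if b = true then 1 else -1
        have h5 := endpt_snoc (Fin.init d) b
        rw [hself] at h5
        rw [← he, h5]; ring
    · intro e he
      rw [mem_pathsTo] at he
      obtain ⟨⟨h, h0⟩, he'⟩ := he
      rw [mem_pend]
      refine ⟨?_, by simp, ?_⟩
      · show (Fin.snoc e b : Fin (n+1+1) → Bool) 0 = true
        have : (0 : Fin (n+1+1)) = Fin.castSucc 0 := rfl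
        rw [this, Fin.snoc_castSucc]
        simpa using h0
      · rw [endpt_snoc, he']; ring
    · intro d hd
      rw [mem_pend] at hd
      rw [← hd.2.1]
      exact Fin.snoc_init_self d
    · intro e _
      simp
    · intro d hd
      rw [mem_pend] at hd
      have hself : (Fin.snoc (Fin.init d) b : Fin (n+1+1) → Bool) = d := by
        rw [← hd.2.1]; exact Fin.snoc_init_self d
      rw [hself]
  rw [step1, sum_pathsTo]
  have key : ∀ c : Bool, ∀ e ∈ pend (x - (if b then 1 else -1)) n c,
      (-Complex.I)^(turns (Fin.snoc e b : Fin (n+1+1) → Bool))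
        = (if c = b then 1 else -Complex.I) * (-Complex.I)^(turns e) := by
    intro c e he
    rw [mem_pend] at he
    rw [turns_snoc, he.2.1, pow_add]
    by_cases hcb : c = b
    · simp [hcb]
    · rw [if_neg hcb, if_neg hcb]
      ring
  rw [Finset.sum_congr rfl (key true), Finset.sum_congr rfl (key false)]
  cases b <;> simp [Finset.mul_sum] <;> try ring

lemma endpt_ge {m : ℕ} (d : Fin (m+1) → Bool) (h : d 0 = true) : 2 - (m+1 : ℤ) ≤ endpt d := by
  unfold endpt
  rw [← Finset.sum_erase_add _ _ (Finset.mem_univ (0 : Fin (m+1)))]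
  have h1 : (if d 0 then (1:ℤ) else -1) = 1 := by rw [h]; rfl
  rw [h1]
  have h2 : ((Finset.univ.erase (0 : Fin (m+1))).card) • (-1 : ℤ) ≤
      ∑ i ∈ Finset.univ.erase (0 : Fin (m+1)), (if d i then (1:ℤ) else -1) := by
    apply Finset.card_nsmul_le_sum
    intro i _
    split <;> omega
  have h3 : (Finset.univ.erase (0 : Fin (m+1))).card = m := by
    rw [Finset.card_erase_of_mem (Finset.mem_univ _)]
    simp
  rw [h3] at h2
  have h4 : m • (-1 : ℤ) = -(m:ℤ) := by simp
  rw [h4] at h2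
  linarith

lemma endpt_le_of_false {m : ℕ} (d : Fin (m+1) → Bool) (j : Fin (m+1)) (h : d j = false) :
    endpt d ≤ (m+1 : ℤ) - 2 := by
  unfold endpt
  rw [← Finset.sum_erase_add _ _ (Finset.mem_univ j)]
  have h1 : (if d j then (1:ℤ) else -1) = -1 := by rw [h]; rfl
  rw [h1]
  have h2 : ∑ i ∈ Finset.univ.erase j, (if d i then (1:ℤ) else -1) ≤
      ((Finset.univ.erase j).card) • (1 : ℤ) := by
    apply Finset.sum_le_card_nsmul
    intro i _
    split <;> omega
  have h3 : (Finset.univ.erase j).card = m := by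
    rw [Finset.card_erase_of_mem (Finset.mem_univ _)]
    simp
  rw [h3] at h2
  have h4 : m • (1 : ℤ) = (m:ℤ) := by simp
  rw [h4] at h2
  linarith

lemma main_ind (n : ℕ) : ∀ p q : ℕ, p + q = n + 1 →
    (∑ d ∈ pend ((p:ℤ) - q) n true, (-Complex.I)^turns d) = ((TT p q : ℝ) : ℂ) ∧
    (∑ d ∈ pend ((p:ℤ) - q) n false, (-Complex.I)^turns d) = -Complex.I * ((OO p q : ℝ) : ℂ) := by
  induction n with
  | zero =>
    intro p q hpq
    have hple : p ≤ 1 := by omega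
    interval_cases p
    · -- p = 0, q = 1
      have hq : q = 1 := by omega
      subst hq
      have h1 : pend ((0:ℤ) - 1) 0 true = ∅ := by decide
      have h2 : pend ((0:ℤ) - 1) 0 false = ∅ := by decide
      rw [show ((0:ℕ):ℤ) - ((1:ℕ):ℤ) = (0:ℤ) - 1 by norm_num, h1, h2]
      rw [TT, EE_zero_left, OO_zero_left]
      norm_num
    · -- p = 1, q = 0
      have hq : q = 0 := by omega
      subst hq
      have h1 : pend ((1:ℤ) - 0) 0 true = {fun _ => true} := by decide
      have h2 : pend ((1:ℤ) - 0) 0 false = ∅ := by decide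
      rw [show ((1:ℕ):ℤ) - ((0:ℕ):ℤ) = (1:ℤ) - 0 by norm_num, h1, h2]
      rw [TT, EE_zero_right, OO_zero_right]
      have ht : turns (fun _ : Fin 1 => true) = 0 := by decide
      rw [Finset.sum_singleton, ht]
      norm_num
  | succ n ih =>
    intro p q hpq
    constructor
    · -- true part
      rcases Nat.eq_zero_or_pos p with hp | hp
      · subst hp
        have hempty : pend ((0:ℕ) - (q:ℤ)) (n+1) true = ∅ := by
          rw [Finset.eq_empty_iff_forall_notMem]
          intro d hd
          rw [mem_pend] at hd
          have := endpt_ge d hd.1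
          rw [hd.2.2] at this
          have hq : q = n + 2 := by omega
          omega
        rw [hempty, TT, EE_zero_left]
        have : ¬ (q = 0 ∧ 1 ≤ 0) := by omega
        rw [if_neg this]
        norm_num
      · obtain ⟨p', rfl⟩ : ∃ p', p = p' + 1 := ⟨p - 1, by omega⟩
        rw [sum_pend_succ]
        have hx : ((p'+1 : ℕ):ℤ) - (q:ℤ) - (if true then 1 else -1) = (p':ℤ) - q := by
          norm_num; push_cast; ring
        rw [hx]
        have ihh := ih p' q (by omega)
        rw [show (!true) = false from rfl, ihh.1, ihh.2]
        have hA : TT (p'+1) q = TT p' q - OO p' q := lemA p' q (by omega)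
        rw [hA]
        push_cast
        have : (-Complex.I) * (-Complex.I * (OO p' q : ℂ)) = -(OO p' q : ℂ) := by
          have h2 : (-Complex.I) * (-Complex.I * (OO p' q : ℂ)) = (Complex.I^2) * (OO p' q : ℂ) := by
            ring
          rw [h2, Complex.I_sq]
          ring
        rw [this]
        ring
    · -- false part
      rcases Nat.eq_zero_or_pos q with hq | hq
      · subst hq
        have hempty : pend ((p:ℤ) - (0:ℕ)) (n+1) false = ∅ := by
          rw [Finset.eq_empty_iff_forall_notMem]
          intro d hd
          rw [mem_pend] at hd
          have := endpt_le_of_false d (Fin.last (n+1)) hd.2.1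
          rw [hd.2.2] at this
          have hp : p = n + 2 := by omega
          omega
        rw [hempty, OO_zero_right]
        norm_num
      · obtain ⟨q', rfl⟩ : ∃ q', q = q' + 1 := ⟨q - 1, by omega⟩
        rw [sum_pend_succ]
        have hx : ((p : ℕ):ℤ) - ((q'+1:ℕ):ℤ) - (if false then 1 else -1) = (p:ℤ) - q' := by
          norm_num; push_cast; ring
        rw [hx]
        have ihh := ih p q' (by omega)
        rw [show (!false) = true from rfl, ihh.1, ihh.2]
        have hB : OO p (q'+1) = TT p q' + OO p q' := lemB p q'
        rw [hB]
        push_cast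
        ring

/-- "Explicit" formula for the basic model. -/
theorem explicit_formula_basic (x t : ℤ) (hx : |x| < t) (hpar : Even (x + t)) :
    (a x t).re = (2 : ℝ) ^ (((1 : ℝ) - t) / 2) *
      ∑ r ∈ Finset.range (((t - |x|) / 2).toNat + 1),
        (-1 : ℝ) ^ r * intChoose ((x + t - 2) / 2) r * intChoose ((t - x - 2) / 2) r ∧
    (a x t).im = (2 : ℝ) ^ (((1 : ℝ) - t) / 2) *
      ∑ r ∈ Finset.Icc 1 (((t - |x|) / 2).toNat),
        (-1 : ℝ) ^ r * intChoose ((x + t - 2) / 2) r * intChoose ((t - x - 2) / 2) ((r : ℤ) - 1) := by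
  have habs := abs_lt.mp hx
  obtain ⟨k, hk⟩ := hpar
  set p : ℕ := ((x + t) / 2).toNat with hpdef
  set q : ℕ := ((t - x) / 2).toNat with hqdef
  have hp : (p : ℤ) = (x + t) / 2 := by rw [hpdef]; rw [Int.toNat_of_nonneg]; omega
  have hq : (q : ℤ) = (t - x) / 2 := by rw [hqdef]; rw [Int.toNat_of_nonneg]; omega
  have hp2 : 2 * (p:ℤ) = x + t := by omega
  have hq2 : 2 * (q:ℤ) = t - x := by omega
  have hp1 : 1 ≤ p := by omega
  have hq1 : 1 ≤ q := by omega
  have hpq : (p:ℤ) - q = x := by omega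
  have hpqt : p + q = t.toNat := by omega
  have hM : ((t - |x|) / 2).toNat = min p q := by
    rcases abs_cases x with ⟨he, _⟩ | ⟨he, _⟩ <;> rw [he] <;> omega
  have hd1 : (x + t - 2) / 2 = (p:ℤ) - 1 := by omega
  have hd2 : (t - x - 2) / 2 = (q:ℤ) - 1 := by omega
  obtain ⟨n, hn⟩ : ∃ n, t.toNat = n + 1 := ⟨t.toNat - 1, by omega⟩
  -- compute a x t
  have hsum : (∑ d ∈ pathsTo x t.toNat, (-Complex.I) ^ turns d)
      = ((EE p q : ℝ) : ℂ) + -Complex.I * ((OO p q : ℝ) : ℂ) := by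
    rw [hn, sum_pathsTo]
    have hmain := main_ind n p q (by omega)
    rw [← hpq, hmain.1, hmain.2, TT]
    have : ¬ (q = 0 ∧ 1 ≤ p) := by omega
    rw [if_neg this]
    push_cast
    ring
  set s : ℝ := ((1:ℝ) - t) / 2 with hsdef
  have hcpow : (2 : ℂ) ^ ((1 - (t : ℂ)) / 2) = ((2:ℝ) ^ s : ℝ) := by
    rw [Complex.ofReal_cpow (by norm_num : (0:ℝ) ≤ 2)]
    norm_num [hsdef]
  have ha : a x t = (((2:ℝ)^s * OO p q : ℝ) : ℂ) + (((2:ℝ)^s * EE p q : ℝ) : ℂ) * Complex.I := by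
    rw [a, hsum, hcpow]
    push_cast
    have hI : Complex.I * Complex.I = -1 := Complex.I_mul_I
    ring_nf
    rw [Complex.I_sq]
    ring
  have hre : (a x t).re = (2:ℝ)^s * OO p q := by rw [ha]; simp
  have him : (a x t).im = (2:ℝ)^s * EE p q := by rw [ha]; simp
  constructor
  · rw [hre, hM, hd1, hd2]
    congr 1
    rw [OO]
    refine (Finset.sum_subset ?_ ?_).symm
    · intro r hr
      simp only [Finset.mem_range] at hr ⊢
      omega
    · intro r hr hnr
      simp only [Finset.mem_range] at hr hnr
      have hrp : p < r := by omega
      rw [intChoose_gt (n := (p:ℤ)-1) (k := (r:ℤ)) (by omega)]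
      ring
  · rw [him, hM, hd1, hd2]
    congr 1
    have hins : Finset.range (min p q + 1) = insert 0 (Finset.Icc 1 (min p q)) := by
      ext r
      simp only [Finset.mem_range, Finset.mem_insert, Finset.mem_Icc]
      omega
    have hzero : (-1:ℝ)^(0:ℕ) * intChoose ((p:ℤ)-1) ((0:ℕ):ℤ) * intChoose ((q:ℤ)-1) (((0:ℕ):ℤ)-1) = 0 := by
      rw [intChoose_neg_right (n := (q:ℤ)-1) (by norm_num)]
      ring
    have step : ∑ r ∈ Finset.Icc 1 (min p q),
        (-1:ℝ)^r * intChoose ((p:ℤ)-1) r * intChoose ((q:ℤ)-1) ((r:ℤ)-1)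
        = ∑ r ∈ Finset.range (min p q + 1),
        (-1:ℝ)^r * intChoose ((p:ℤ)-1) r * intChoose ((q:ℤ)-1) ((r:ℤ)-1) := by
      rw [hins, Finset.sum_insert (by simp), hzero, zero_add]
    rw [step, EE]
    refine (Finset.sum_subset ?_ ?_).symm
    · intro r hr
      simp only [Finset.mem_range] at hr ⊢
      omega
    · intro r hr hnr
      simp only [Finset.mem_range] at hr hnr
      rw [intChoose_gt (n := (p:ℤ)-1) (k := (r:ℤ)) (by omega)]
      ring
end
end

section
/- Fix ε > 0, m ≥ 0. For all (x,t) ∈ εℤ² with t > 0: a1(x,t,m,ε) = a1(−x,t,m,ε); (t−x)·a2(x,t,m,ε) = (t+x−2ε)·a2(2ε−x,t,m,ε); and a1(x,t,m,ε) + mε·a2(x,t,m,ε) = a1(2ε−x,t,m,ε) + mε·a2(2ε−x,t,m,ε). -/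
open scoped BigOperators

noncomputable section

namespace FeynAux

def flipb {n : ℕ} (d : Fin n → Bool) : Fin n → Bool := fun i => !(d i)

lemma endpt_flipb {n : ℕ} (d : Fin n → Bool) : endpt (flipb d) = -endpt d := by
  unfold endpt flipb
  rw [← Finset.sum_neg_distrib]
  apply Finset.sum_congr rfl
  intro i _
  cases h : d i <;> simp [h]

lemma turns_flipb {n : ℕ} (d : Fin n → Bool) : turns (flipb d) = turns d := by
  unfold turns flipb
  congr 1
  apply Finset.filter_congr
  intro i _
  constructor
  · rintro ⟨h, hne⟩; exact ⟨h, by simpa using hne⟩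
  · rintro ⟨h, hne⟩; exact ⟨h, by simpa using hne⟩

lemma flipb_flipb {n : ℕ} (d : Fin n → Bool) : flipb (flipb d) = d := by
  funext i; simp [flipb]

lemma endpt_cons {n : ℕ} (b : Bool) (e : Fin n → Bool) :
    endpt (Fin.cons b e) = (if b then 1 else -1) + endpt e := by
  unfold endpt
  rw [Fin.sum_univ_succ]
  simp

lemma turns_cons {n : ℕ} (hn : 0 < n) (e : Fin n → Bool) :
    turns (Fin.cons true e : Fin (n+1) → Bool)
      = turns e + (if e ⟨0, hn⟩ then 0 else 1) := by
  unfold turns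
  rw [Finset.card_filter, Finset.card_filter, Finset.sum_range_succ']
  congr 1
  · apply Finset.sum_congr rfl
    intro i _
    have key : (∃ h : i + 1 + 1 < n + 1,
        (Fin.cons true e : Fin (n+1) → Bool) ⟨i+1, Nat.lt_of_succ_lt h⟩
          ≠ (Fin.cons true e : Fin (n+1) → Bool) ⟨i+1+1, h⟩)
        ↔ (∃ h : i + 1 < n, e ⟨i, Nat.lt_of_succ_lt h⟩ ≠ e ⟨i+1, h⟩) := by
      constructor
      · rintro ⟨h, hne⟩; exact ⟨by omega, hne⟩
      · rintro ⟨h, hne⟩; exact ⟨by omega, hne⟩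
    exact if_congr key rfl rfl
  · have key : (∃ h : 0 + 1 < n + 1,
        (Fin.cons true e : Fin (n+1) → Bool) ⟨0, Nat.lt_of_succ_lt h⟩
          ≠ (Fin.cons true e : Fin (n+1) → Bool) ⟨0+1, h⟩)
        ↔ e ⟨0, hn⟩ = false := by
      constructor
      · rintro ⟨h, hne⟩
        have : (true : Bool) ≠ e ⟨0, hn⟩ := hne
        cases hh : e ⟨0, hn⟩
        · rfl
        · exact absurd hh.symm this
      · intro h
        refine ⟨by omega, ?_⟩
        have : (true : Bool) ≠ e ⟨0, hn⟩ := by rw [h]; simp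
        exact this
    rw [if_congr key rfl rfl]
    cases hh : e ⟨0, hn⟩ <;> simp [hh]

lemma mem_pathsTo {n : ℕ} (hn : 0 < n) {x : ℤ} {d : Fin n → Bool} :
    d ∈ pathsTo x n ↔ d ⟨0, hn⟩ = true ∧ endpt d = x := by
  simp only [pathsTo, Finset.mem_filter, Finset.mem_univ, true_and]
  constructor
  · rintro ⟨⟨h, h1⟩, h2⟩; exact ⟨h1, h2⟩
  · rintro ⟨h1, h2⟩; exact ⟨⟨hn, h1⟩, h2⟩



def S (μ : ℝ) (x : ℤ) (n : ℕ) : ℂ :=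
  ∑ d ∈ pathsTo x n, (-Complex.I * (μ : ℂ)) ^ turns d

lemma S_one (μ : ℝ) (x : ℤ) : S μ x 1 = if x = 1 then 1 else 0 := by
  have hturn : ∀ d : Fin 1 → Bool, turns d = 0 := by
    intro d
    unfold turns
    rw [Finset.card_eq_zero, Finset.filter_eq_empty_iff]
    intro i _
    rintro ⟨h, -⟩
    omega
  have hset : pathsTo x 1 = if x = 1 then {(fun _ => true : Fin 1 → Bool)} else ∅ := by
    ext d
    rw [mem_pathsTo Nat.one_pos]
    have hone : endpt (fun _ : Fin 1 => true) = 1 := by simp [endpt]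
    constructor
    · rintro ⟨h1, h2⟩
      have hd : d = (fun _ => true) := by
        funext i
        have hi : i = ⟨0, Nat.one_pos⟩ := Subsingleton.elim _ _
        rw [hi, h1]
      rw [hd, hone] at h2
      simp [← h2, hd]
    · intro hmem
      by_cases hx : x = 1
      · rw [hx] at hmem ⊢
        have hd : d = (fun _ => true) := by simpa using hmem
        subst hd
        exact ⟨rfl, hone⟩
      · simp [hx] at hmem
  unfold S
  rw [hset]
  by_cases hx : x = 1 <;> simp [hx, hturn]

lemma S_rec (μ : ℝ) (x : ℤ) {n : ℕ} (hn : 0 < n) :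
    S μ x (n+1) = S μ (x-1) n + (-Complex.I * (μ:ℂ)) * S μ (1-x) n := by
  have step1 : S μ x (n+1)
      = ∑ e ∈ Finset.univ.filter (fun e : Fin n → Bool => endpt e = x - 1),
          (-Complex.I * (μ:ℂ)) ^ turns (Fin.cons true e : Fin (n+1) → Bool) := by
    unfold S
    apply Finset.sum_nbij' (fun d => Fin.tail d) (fun e => Fin.cons true e)
    · intro d hd
      rw [mem_pathsTo (Nat.succ_pos n)] at hd
      obtain ⟨h1, h2⟩ := hd
      have hd0 : d 0 = true := h1
      have hsplit : endpt d = 1 + endpt (Fin.tail d) := by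
        conv_lhs => rw [← Fin.cons_self_tail d]
        rw [endpt_cons, hd0]
        simp
      simp only [Finset.mem_filter, Finset.mem_univ, true_and]
      omega
    · intro e he
      simp only [Finset.mem_filter, Finset.mem_univ, true_and] at he
      rw [mem_pathsTo (Nat.succ_pos n)]
      refine ⟨rfl, ?_⟩
      rw [endpt_cons, he]
      simp
    · intro d hd
      rw [mem_pathsTo (Nat.succ_pos n)] at hd
      have hd0 : d 0 = true := hd.1
      conv_rhs => rw [← Fin.cons_self_tail d]
      rw [hd0]
    · intro e _
      exact Fin.tail_cons _ _
    · intro d hd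
      rw [mem_pathsTo (Nat.succ_pos n)] at hd
      have hd0 : d 0 = true := hd.1
      congr 1
      conv_lhs => rw [← Fin.cons_self_tail d, hd0]
  rw [step1]
  rw [← Finset.sum_filter_add_sum_filter_not _ (fun e => e ⟨0, hn⟩ = true)]
  congr 1
  · -- first-true part equals S μ (x-1) n
    unfold S
    apply Finset.sum_congr
    · ext e
      simp only [Finset.mem_filter, Finset.mem_univ, true_and, mem_pathsTo hn]
      tauto
    · intro e he
      rw [mem_pathsTo hn] at he
      rw [turns_cons hn, he.1]
      simp
  · -- first-false part
    have hval : ∀ e ∈ (Finset.univ.filter (fun e : Fin n → Bool => endpt e = x - 1)).filter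
        (fun e => ¬ (e ⟨0, hn⟩ = true)),
        (-Complex.I * (μ:ℂ)) ^ turns (Fin.cons true e : Fin (n+1) → Bool)
          = (-Complex.I * (μ:ℂ)) * (-Complex.I * (μ:ℂ)) ^ turns e := by
      intro e he
      simp only [Finset.mem_filter, Finset.mem_univ, true_and, Bool.not_eq_true] at he
      rw [turns_cons hn, he.2]
      simp only [Bool.false_eq_true, if_false, pow_succ]
      ring
    rw [Finset.sum_congr rfl hval, ← Finset.mul_sum]
    congr 1
    unfold S
    apply Finset.sum_nbij' (fun e => flipb e) (fun e => flipb e)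
    · intro e he
      simp only [Finset.mem_filter, Finset.mem_univ, true_and, Bool.not_eq_true] at he
      rw [mem_pathsTo hn]
      constructor
      · simp [flipb, he.2]
      · rw [endpt_flipb, he.1]; ring
    · intro e he
      rw [mem_pathsTo hn] at he
      simp only [Finset.mem_filter, Finset.mem_univ, true_and, Bool.not_eq_true]
      constructor
      · rw [endpt_flipb, he.2]; ring
      · simp [flipb, he.1]
    · intro e _; exact flipb_flipb e
    · intro e _; exact flipb_flipb e
    · intro e _
      rw [turns_flipb]


def Pf (μ : ℝ) (x : ℤ) (n : ℕ) : ℝ := (S μ x n).re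
def Qf (μ : ℝ) (x : ℤ) (n : ℕ) : ℝ := (S μ x n).im

lemma P_one (μ : ℝ) (x : ℤ) : Pf μ x 1 = if x = 1 then 1 else 0 := by
  unfold Pf; rw [S_one]; split_ifs <;> simp

lemma Q_one (μ : ℝ) (x : ℤ) : Qf μ x 1 = 0 := by
  unfold Qf; rw [S_one]; split_ifs <;> simp

lemma P_rec (μ : ℝ) (x : ℤ) {n : ℕ} (hn : 0 < n) :
    Pf μ x (n+1) = Pf μ (x-1) n + μ * Qf μ (1-x) n := by
  unfold Pf Qf
  rw [S_rec μ x hn]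
  simp [Complex.add_re, Complex.mul_re, Complex.mul_im]

lemma Q_rec (μ : ℝ) (x : ℤ) {n : ℕ} (hn : 0 < n) :
    Qf μ x (n+1) = Qf μ (x-1) n - μ * Pf μ (1-x) n := by
  unfold Pf Qf
  rw [S_rec μ x hn]
  simp [Complex.add_im, Complex.mul_re, Complex.mul_im]
  ring

lemma main (μ : ℝ) : ∀ n : ℕ, 1 ≤ n → ∀ x : ℤ,
    Qf μ x n = Qf μ (-x) n ∧
    ((n:ℝ) - (x:ℝ)) * Pf μ x n = ((n:ℝ) + (x:ℝ) - 2) * Pf μ (2-x) n ∧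
    (-Qf μ x n + μ * Pf μ x n = -Qf μ (2-x) n + μ * Pf μ (2-x) n) ∧
    ((n:ℝ) - (x:ℝ)) * Pf μ x n - ((n:ℝ) + (x:ℝ)) * Pf μ (-x) n
      = 2 * (x:ℝ) * μ * Qf μ x n := by
  intro n hn
  induction n, hn using Nat.le_induction with
  | base =>
    intro x
    have hQ : ∀ y : ℤ, Qf μ y 1 = 0 := Q_one μ
    have hP : ∀ y : ℤ, Pf μ y 1 = if y = 1 then 1 else 0 := P_one μ
    refine ⟨by rw [hQ, hQ], ?_, ?_, ?_⟩
    · rw [hP, hP]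
      rcases eq_or_ne x 1 with hx | hx
      · subst hx; norm_num
      · rw [if_neg hx, if_neg (by omega : (2:ℤ) - x ≠ 1)]
        ring
    · rw [hQ, hQ, hP, hP]
      rcases eq_or_ne x 1 with hx | hx
      · subst hx; norm_num
      · rw [if_neg hx, if_neg (by omega : (2:ℤ) - x ≠ 1)]
    · rw [hQ, hP, hP]
      rcases eq_or_ne x 1 with hx | hx
      · subst hx; norm_num
      · rw [if_neg hx]
        rcases eq_or_ne x (-1) with hx2 | hx2
        · subst hx2; norm_num
        · rw [if_neg (by omega : -x ≠ 1)]
          ring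
  | succ n hn IH =>
    intro x
    have recP : ∀ y : ℤ, Pf μ y (n+1) = Pf μ (y-1) n + μ * Qf μ (1-y) n :=
      fun y => P_rec μ y hn
    have recQ : ∀ y : ℤ, Qf μ y (n+1) = Qf μ (y-1) n - μ * Pf μ (1-y) n :=
      fun y => Q_rec μ y hn
    -- cleaned IH instances
    have h1a : Qf μ (x-1) n = Qf μ (1-x) n := by
      have := (IH (x-1)).1
      rwa [show (-(x-1) : ℤ) = 1-x by ring] at this
    have h1b : Qf μ (x+1) n = Qf μ (-x-1) n := by
      have := (IH (x+1)).1
      rwa [show (-(x+1) : ℤ) = -x-1 by ring] at this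
    have h2b : ((n:ℝ) - ((x:ℝ)+1)) * Pf μ (x+1) n
        = ((n:ℝ) + ((x:ℝ)+1) - 2) * Pf μ (1-x) n := by
      have := (IH (x+1)).2.1
      rw [show ((2:ℤ)-(x+1)) = 1-x by ring] at this
      push_cast at this
      convert this using 2 <;> ring
    have h3b : -Qf μ (x+1) n + μ * Pf μ (x+1) n
        = -Qf μ (1-x) n + μ * Pf μ (1-x) n := by
      have := (IH (x+1)).2.2.1
      rwa [show ((2:ℤ)-(x+1)) = 1-x by ring] at this
    have h4a : ((n:ℝ) - ((x:ℝ)-1)) * Pf μ (x-1) n - ((n:ℝ) + ((x:ℝ)-1)) * Pf μ (1-x) n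
        = 2 * ((x:ℝ)-1) * μ * Qf μ (x-1) n := by
      have := (IH (x-1)).2.2.2
      rw [show (-(x-1) : ℤ) = 1-x by ring] at this
      push_cast at this
      convert this using 2 <;> ring
    have h4b : ((n:ℝ) + ((x:ℝ)+1)) * Pf μ (-x-1) n - ((n:ℝ) - ((x:ℝ)+1)) * Pf μ (x+1) n
        = -2 * ((x:ℝ)+1) * μ * Qf μ (-x-1) n := by
      have := (IH (-x-1)).2.2.2
      rw [show (-(-x-1) : ℤ) = x+1 by ring] at this
      push_cast at this
      convert this using 2 <;> ring
    refine ⟨?_, ?_, ?_, ?_⟩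
    · rw [recQ x, recQ (-x), show ((-x : ℤ)-1) = -x-1 from rfl,
        show ((1:ℤ)-(-x)) = x+1 by ring]
      linear_combination h1a + h1b + h3b
    · rw [recP x, recP (2-x), show ((2:ℤ)-x-1) = 1-x by ring,
        show ((1:ℤ)-(2-x)) = x-1 by ring]
      push_cast
      linear_combination h4a - (μ*((n:ℝ)+1-(x:ℝ)))*h1a
    · rw [recQ x, recQ (2-x), recP x, recP (2-x),
        show ((2:ℤ)-x-1) = 1-x by ring, show ((1:ℤ)-(2-x)) = x-1 by ring]
      linear_combination (-(1+μ^2))*h1a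
    · rw [recP x, recP (-x), recQ x, show ((-x : ℤ)-1) = -x-1 from rfl,
        show ((1:ℤ)-(-x)) = x+1 by ring]
      push_cast
      linear_combination h4a - h4b - 2*μ*h1a - 2*((x:ℝ)+1)*μ*h1b
        - (1+μ^2)*h2b + ((n:ℝ)-(x:ℝ)-1)*μ*h3b
end FeynAux

/-- Symmetry identities for Feynman checkers with mass m and lattice step ε. -/
theorem symmetry_mass (m ε : ℝ) (hε : 0 < ε) (hm : 0 ≤ m) (x t : ℤ) (ht : 0 < t) :
    (am x t m ε).re = (am (-x) t m ε).re ∧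
    (ε * (t : ℝ) - ε * (x : ℝ)) * (am x t m ε).im
      = (ε * (t : ℝ) + ε * (x : ℝ) - 2 * ε) * (am (2 - x) t m ε).im ∧
    (am x t m ε).re + m * ε * (am x t m ε).im
      = (am (2 - x) t m ε).re + m * ε * (am (2 - x) t m ε).im := by
  classical
  set n := t.toNat with hn
  have hn1 : 1 ≤ n := by omega
  have htR : (t:ℝ) = (n:ℝ) := by
    have h : ((n:ℤ)) = t := Int.toNat_of_nonneg ht.le
    exact_mod_cast h.symm
  set μ := m * ε with hμ
  set r := (1 + m^2*ε^2) ^ ((1 - (t:ℝ))/2) with hr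
  have h0 : (0:ℝ) ≤ 1 + m^2*ε^2 := by positivity
  have hC : ((1 + m ^ 2 * ε ^ 2 : ℂ)) ^ ((1 - (t : ℂ)) / 2) = (r:ℂ) := by
    rw [hr, Complex.ofReal_cpow h0]
    congr 1 <;> push_cast <;> ring
  have ham : ∀ y : ℤ, am y t m ε = (r:ℂ) * Complex.I * FeynAux.S μ y n := by
    intro y
    unfold am FeynAux.S
    rw [hC]
    congr 1
    apply Finset.sum_congr rfl
    intro d _
    rw [hμ, Complex.ofReal_mul]
  have hre : ∀ y : ℤ, (am y t m ε).re = -r * FeynAux.Qf μ y n := by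
    intro y
    rw [ham y]
    simp [FeynAux.Qf, Complex.mul_re, Complex.mul_im]
  have him : ∀ y : ℤ, (am y t m ε).im = r * FeynAux.Pf μ y n := by
    intro y
    rw [ham y]
    simp [FeynAux.Pf, Complex.mul_re, Complex.mul_im]
  obtain ⟨H1, H2, H3, H4⟩ := FeynAux.main μ n hn1 x
  refine ⟨?_, ?_, ?_⟩
  · rw [hre x, hre (-x), H1]
  · rw [him x, him (2-x), htR]
    push_cast
    linear_combination (ε*r) * H2
  · rw [hre x, hre (2-x), him x, him (2-x)]
    linear_combination r * H3
end
end

section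
/- Fix ε > 0, m ≥ 0. For all (x,t) ∈ εℤ² with |x| < t and (x+t)/ε even: a1(x,t,m,ε) = (1+m²ε²)^{(1−t/ε)/2} · Σ_{r=0}^{(t−|x|)/(2ε)} (−1)^r · C((x+t)/(2ε)−1, r) · C((t−x)/(2ε)−1, r) · (mε)^{2r+1}, and a2(x,t,m,ε) = (1+m²ε²)^{(1−t/ε)/2} · Σ_{r=1}^{(t−|x|)/(2ε)} (−1)^r · C((x+t)/(2ε)−1, r) · C((t−x)/(2ε)−1, r−1) · (mε)^{2r}. -/
open scoped BigOperators

noncomputable section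

/-!
A checker path from `(0,0)` to `(x,t)` has `p = (t+x)/2` right steps and `q = (t-x)/2` left
steps. If it starts to the right and has `k` turns, it consists of `k + 1` alternating runs, the
first one to the right, so its runs cut `p` into `⌊k/2⌋ + 1` positive parts and `q` into
`⌈k/2⌉` positive parts: there are `C(p-1, ⌊k/2⌋) · C(q-1, ⌈k/2⌉-1)` such paths. The weight
`(-imε)^k` is real for even `k` and imaginary for odd `k`, so after multiplying by `i` the odd
`k = 2r+1` give `a₁` and the even `k = 2r` give `a₂`.
-/

open Finset Complex

/-- The number of compositions of `m` into `j` positive parts. -/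
def compositionCount : ℕ → ℕ → ℕ
  | 0, 0 => 1
  | 0, _ + 1 => 0
  | _ + 1, 0 => 0
  | m + 1, j + 1 => compositionCount m j + compositionCount m (j + 1)

theorem compositionCount_succ_succ (m j : ℕ) : compositionCount (m + 1) (j + 1) = m.choose j := by
  induction m generalizing j with
  | zero => cases j <;> rfl
  | succ m ih =>
    cases j with
    | zero => rw [compositionCount, ih]; simp [compositionCount]
    | succ j => rw [compositionCount, ih, ih, Nat.choose_succ_succ]

theorem compositionCount_eq_intChoose {m : ℕ} (hm : 0 < m) (j : ℕ) :
    (compositionCount m j : ℝ) = intChoose ((m : ℤ) - 1) ((j : ℤ) - 1) := by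
  obtain ⟨m, rfl⟩ := Nat.exists_eq_add_of_lt hm
  cases j with
  | zero => simp [compositionCount, intChoose]
  | succ j =>
    simp only [zero_add, compositionCount_succ_succ, intChoose, Nat.cast_add, Nat.cast_one,
      add_sub_cancel_right, Int.toNat_natCast]
    split_ifs with h
    · rfl
    · rw [Nat.choose_eq_zero_of_lt (by omega), Nat.cast_zero]

theorem intChoose_eq_zero {n k : ℤ} (h : k < 0 ∨ n < k) : intChoose n k = 0 :=
  if_neg (by omega)

theorem turns_le {n : ℕ} (d : Fin n → Bool) : turns d ≤ n :=
  (card_filter_le _ _).trans (card_range n).le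

theorem turns_eq_card {n : ℕ} (d : Fin (n + 1) → Bool) :
    turns d = #{i : Fin n | d i.castSucc ≠ d i.succ} := by
  rw [turns, card_filter, card_filter, sum_range_succ, ← Fin.sum_univ_eq_sum_range]
  simp [Fin.castSucc, Fin.succ, Fin.castAdd, Fin.castLE]

theorem turns_cons {n : ℕ} (c : Bool) (d : Fin (n + 1) → Bool) :
    turns (Fin.cons c d : Fin (n + 2) → Bool) = turns d + if c = d 0 then 0 else 1 := by
  rw [turns_eq_card, turns_eq_card, card_filter, card_filter, Fin.sum_univ_succ, add_comm]
  simp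

theorem endpt_cons {n : ℕ} (c : Bool) (d : Fin n → Bool) :
    endpt (Fin.cons c d : Fin (n + 1) → Bool) = (if c then 1 else -1) + endpt d := by
  simp [endpt, Fin.sum_univ_succ]

theorem turns_not {n : ℕ} (d : Fin n → Bool) : turns (fun i => !d i) = turns d := by
  simp [turns]

theorem endpt_not {n : ℕ} (d : Fin n → Bool) : endpt (fun i => !d i) = -endpt d := by
  simp only [endpt, ← sum_neg_distrib]
  exact sum_congr rfl fun i _ => by split_ifs <;> simp_all

theorem abs_endpt_le {n : ℕ} (d : Fin n → Bool) : |endpt d| ≤ n := by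
  have hstep : ∀ i, |if d i then (1 : ℤ) else -1| ≤ 1 := fun i => by split_ifs <;> simp
  calc |endpt d| ≤ ∑ i, |if d i then (1 : ℤ) else -1| := abs_sum_le_sum_abs _ _
    _ ≤ ∑ _i : Fin n, 1 := sum_le_sum fun i _ => hstep i
    _ = n := by simp

@[simp]
theorem mem_pathsTo_succ {x : ℤ} {n : ℕ} {d : Fin (n + 1) → Bool} :
    d ∈ pathsTo x (n + 1) ↔ d 0 = true ∧ endpt d = x := by
  simp [pathsTo]

theorem pathsTo_succ (x : ℤ) (n : ℕ) :
    pathsTo x (n + 1) = ({e | endpt e = x - 1} : Finset (Fin n → Bool)).map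
      ⟨Fin.cons true, Fin.cons_right_injective _⟩ := by
  ext d
  simp only [mem_pathsTo_succ, mem_map, mem_filter, mem_univ, true_and,
    Function.Embedding.coeFn_mk]
  constructor
  · rintro ⟨h0, hx⟩
    have hd : Fin.cons true (Fin.tail d) = d := h0 ▸ Fin.cons_self_tail d
    refine ⟨_, ?_, hd⟩
    have := endpt_cons true (Fin.tail d)
    rw [hd, hx, if_pos rfl] at this
    omega
  · rintro ⟨e, he, rfl⟩
    exact ⟨rfl, by rw [endpt_cons, he]; simp⟩

theorem pathsTo_neg_self (n : ℕ) : pathsTo (-n) n = ∅ := by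
  cases n with
  | zero => simp [pathsTo]
  | succ n =>
    rw [pathsTo_succ, map_eq_empty, filter_eq_empty_iff]
    intro e _ he
    have := neg_abs_le (endpt e)
    linarith [abs_endpt_le e, show endpt e = -n - 2 by rw [he]; push_cast; ring]

theorem sum_pathsTo_succ_succ {M : Type*} [AddCommMonoid M] (f : ℕ → M) (x : ℤ) (n : ℕ) :
    ∑ d ∈ pathsTo x (n + 2), f (turns d) =
      ∑ d ∈ pathsTo (x - 1) (n + 1), f (turns d) +
        ∑ d ∈ pathsTo (1 - x) (n + 1), f (turns d + 1) := by
  -- After the first step the path either goes on to the right, or turns and is then reflected.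
  rw [pathsTo_succ, sum_map, ← sum_filter_add_sum_filter_not _ (fun e => e 0 = true)]
  simp only [Function.Embedding.coeFn_mk, turns_cons, filter_filter]
  have hs : ({e | endpt e = x - 1 ∧ e 0 = true} : Finset (Fin (n + 1) → Bool)) =
      pathsTo (x - 1) (n + 1) := by
    ext e
    simp [and_comm]
  congr 1
  · rw [hs]
    exact sum_congr rfl fun e he => by simp [(mem_pathsTo_succ.1 he).1]
  · refine sum_nbij' (fun e i => !e i) (fun e i => !e i) ?_ ?_ (by simp) (by simp) ?_
    · intro e he
      simp only [mem_filter, mem_univ, true_and, Bool.not_eq_true] at he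
      simp [he.1, he.2, endpt_not]
    · intro e he
      rw [mem_pathsTo_succ] at he
      simp [he.1, he.2, endpt_not]
    · intro e he
      simp only [mem_filter, mem_univ, true_and, Bool.not_eq_true] at he
      simp [he.2, turns_not]

def pathCount (x : ℤ) (n k : ℕ) : ℕ := #{d ∈ pathsTo x n | turns d = k}

theorem pathCount_one (x : ℤ) (k : ℕ) : pathCount x 1 k = if x = 1 ∧ k = 0 then 1 else 0 := by
  have h0 : ∀ d : Fin 1 → Bool, turns d = 0 := fun d => by simp [turns_eq_card]
  rw [pathCount, pathsTo_succ]
  simp only [h0, endpt, univ_eq_empty, sum_empty]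
  split_ifs <;> simp_all
  omega

theorem pathCount_succ_succ (x : ℤ) (n k : ℕ) :
    pathCount x (n + 2) k =
      pathCount (x - 1) (n + 1) k + #{d ∈ pathsTo (1 - x) (n + 1) | turns d + 1 = k} := by
  simp only [pathCount, card_filter]
  exact sum_pathsTo_succ_succ (fun j => if j = k then 1 else 0) x n

theorem pathCount_sub_add (p q k : ℕ) :
    pathCount (p - q) (p + q) k =
      compositionCount p (k / 2 + 1) * compositionCount q ((k + 1) / 2) := by
  induction hn : p + q using Nat.strong_induction_on generalizing p q k with
  | _ n ih =>
    subst hn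
    rcases p with _ | p
    · rw [Nat.cast_zero, zero_sub, zero_add, pathCount, pathsTo_neg_self]
      simp [compositionCount]
    rcases Nat.eq_zero_or_pos (p + q) with h | h
    · obtain ⟨rfl, rfl⟩ : p = 0 ∧ q = 0 := by omega
      rcases k with _ | k
      · simp [pathCount_one, compositionCount]
      · simp [pathCount_one, show (k + 1 + 1) / 2 = k / 2 + 1 by omega, compositionCount]
    obtain ⟨m, hm⟩ : ∃ m, p + 1 + q = m + 2 := ⟨p + q - 1, by omega⟩
    have hx : ((p + 1 : ℕ) : ℤ) - q - 1 = p - q := by push_cast; ring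
    have hx' : 1 - (((p + 1 : ℕ) : ℤ) - q) = q - p := by push_cast; ring
    rw [hm, pathCount_succ_succ, hx, hx', show m + 1 = p + q by omega,
      ih _ (by omega) p q k rfl]
    rcases k with _ | k
    · rcases q with _ | q
      · obtain ⟨p, rfl⟩ : ∃ p', p = p' + 1 := ⟨p - 1, by omega⟩
        simp [compositionCount_succ_succ]
      · simp [compositionCount]
    · simp only [Nat.add_right_cancel_iff]
      rw [← pathCount, add_comm p q, ih _ (by omega) q p k rfl,
        show (k + 1 + 1) / 2 = k / 2 + 1 by omega, compositionCount]
      ring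

theorem pathCount_sub_add_two_mul (p q r : ℕ) :
    pathCount (p - q) (p + q) (2 * r) = compositionCount p (r + 1) * compositionCount q r := by
  rw [pathCount_sub_add]; congr 3 <;> omega

theorem pathCount_sub_add_two_mul_add_one (p q r : ℕ) :
    pathCount (p - q) (p + q) (2 * r + 1) =
      compositionCount p (r + 1) * compositionCount q (r + 1) := by
  rw [pathCount_sub_add]; congr 3 <;> omega

theorem sum_pathsTo_eq_sum_range {M : Type*} [AddCommMonoid M] (f : ℕ → M) {x : ℤ} {n N : ℕ}
    (hN : n < N) :
    ∑ d ∈ pathsTo x n, f (turns d) = ∑ k ∈ range N, pathCount x n k • f k := by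
  rw [← sum_fiberwise_of_maps_to' fun d _ => mem_range.2 ((turns_le d).trans_lt hN)]
  simp [pathCount]

theorem sum_range_two_mul {M : Type*} [AddCommMonoid M] (f : ℕ → M) (n : ℕ) :
    ∑ k ∈ range (2 * n), f k = ∑ r ∈ range n, (f (2 * r) + f (2 * r + 1)) := by
  induction n with
  | zero => simp
  | succ n ih =>
    rw [mul_add, mul_one, sum_range_succ, sum_range_succ, sum_range_succ, ih, add_assoc]

theorem I_mul_neg_I_mul_pow_two_mul (w : ℝ) (r : ℕ) :
    I * (-I * w) ^ (2 * r) = (((-1) ^ r * w ^ (2 * r) : ℝ) : ℂ) * I := by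
  rw [pow_mul, mul_pow, neg_pow_two, I_sq]
  push_cast; ring

theorem I_mul_neg_I_mul_pow_two_mul_add_one (w : ℝ) (r : ℕ) :
    I * (-I * w) ^ (2 * r + 1) = (((-1) ^ r * w ^ (2 * r + 1) : ℝ) : ℂ) := by
  rw [pow_succ, ← mul_assoc, I_mul_neg_I_mul_pow_two_mul]
  push_cast
  linear_combination -((-1) ^ r * (w : ℂ) ^ (2 * r) * w) * I_mul_I

theorem am_eq_sum (x t : ℤ) (m ε : ℝ) (ht : 0 < t) :
    am x t m ε = ((1 + m ^ 2 * ε ^ 2) ^ (((1 : ℝ) - t) / 2) : ℝ) *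
      ∑ r ∈ range t.toNat,
        ((((-1) ^ r * pathCount x t.toNat (2 * r + 1) * (m * ε) ^ (2 * r + 1) : ℝ) : ℂ) +
          (((-1) ^ r * pathCount x t.toNat (2 * r) * (m * ε) ^ (2 * r) : ℝ) : ℂ) * I) := by
  have hbase : (1 + m ^ 2 * ε ^ 2 : ℂ) ^ ((1 - (t : ℂ)) / 2) =
      ((1 + m ^ 2 * ε ^ 2) ^ (((1 : ℝ) - t) / 2) : ℝ) := by
    rw [ofReal_cpow (by positivity)]
    push_cast
    rfl
  rw [am, hbase, mul_assoc, ← ofReal_mul,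
    sum_pathsTo_eq_sum_range (fun k => (-I * ↑(m * ε)) ^ k) (N := 2 * t.toNat) (by omega),
    sum_range_two_mul, mul_sum]
  refine congrArg _ (sum_congr rfl fun r _ => ?_)
  simp only [nsmul_eq_mul, mul_add, mul_left_comm I, I_mul_neg_I_mul_pow_two_mul,
    I_mul_neg_I_mul_pow_two_mul_add_one]
  push_cast
  ring

theorem sum_pathCount_two_mul_add_one {p q : ℕ} (hp : 0 < p) (hq : 0 < q) (w : ℝ) :
    ∑ r ∈ range (p + q),
        (-1) ^ r * (pathCount (p - q) (p + q) (2 * r + 1) : ℝ) * w ^ (2 * r + 1) =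
      ∑ r ∈ range (min p q + 1),
        (-1) ^ r * intChoose (p - 1) r * intChoose (q - 1) r * w ^ (2 * r + 1) := by
  rw [sum_subset (range_subset_range.2 (by omega : min p q + 1 ≤ p + q))]
  · refine sum_congr rfl fun r _ => ?_
    simp only [pathCount_sub_add_two_mul_add_one, Nat.cast_mul, compositionCount_eq_intChoose hp,
      compositionCount_eq_intChoose hq, Nat.cast_add, Nat.cast_one, add_sub_cancel_right]
    ring
  · intro r _ hr
    rw [mem_range] at hr
    by_cases hpr : (p : ℤ) - 1 < r
    · simp [intChoose_eq_zero (.inr hpr)]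
    · simp [intChoose_eq_zero (n := (q : ℤ) - 1) (k := r) (by omega)]

theorem sum_pathCount_two_mul {p q : ℕ} (hp : 0 < p) (hq : 0 < q) (w : ℝ) :
    ∑ r ∈ range (p + q),
        (-1) ^ r * (pathCount (p - q) (p + q) (2 * r) : ℝ) * w ^ (2 * r) =
      ∑ r ∈ Icc 1 (min p q),
        (-1) ^ r * intChoose (p - 1) r * intChoose (q - 1) ((r : ℤ) - 1) * w ^ (2 * r) := by
  have hsub : Icc 1 (min p q) ⊆ range (p + q) := fun r hr => by
    simp only [mem_Icc, mem_range] at hr ⊢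
    omega
  rw [sum_subset hsub]
  · refine sum_congr rfl fun r _ => ?_
    simp only [pathCount_sub_add_two_mul, Nat.cast_mul, compositionCount_eq_intChoose hp,
      compositionCount_eq_intChoose hq, Nat.cast_add, Nat.cast_one, add_sub_cancel_right]
    ring
  · intro r _ hr
    rw [mem_Icc] at hr
    by_cases hpr : (p : ℤ) - 1 < r
    · simp [intChoose_eq_zero (.inr hpr)]
    · simp [intChoose_eq_zero (n := (q : ℤ) - 1) (k := r - 1) (by omega)]

theorem explicit_formula_mass_general (m ε : ℝ) (x t : ℤ)
    (hx : |x| < t) (hpar : Even (x + t)) :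
    (am x t m ε).re = (1 + m ^ 2 * ε ^ 2) ^ (((1 : ℝ) - t) / 2) *
      ∑ r ∈ Finset.range (((t - |x|) / 2).toNat + 1),
        (-1 : ℝ) ^ r * intChoose ((x + t) / 2 - 1) r * intChoose ((t - x) / 2 - 1) r *
          (m * ε) ^ (2 * r + 1) ∧
    (am x t m ε).im = (1 + m ^ 2 * ε ^ 2) ^ (((1 : ℝ) - t) / 2) *
      ∑ r ∈ Finset.Icc 1 (((t - |x|) / 2).toNat),
        (-1 : ℝ) ^ r * intChoose ((x + t) / 2 - 1) r * intChoose ((t - x) / 2 - 1) ((r : ℤ) - 1) *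
          (m * ε) ^ (2 * r) := by
  obtain ⟨p, q, hp, hq, rfl, rfl⟩ :
      ∃ p q : ℕ, 0 < p ∧ 0 < q ∧ x = p - q ∧ t = p + q := by
    obtain ⟨c, hc⟩ := hpar
    refine ⟨c.toNat, (c - x).toNat, ?_, ?_, ?_, ?_⟩ <;> cases abs_cases x <;> omega
  have hn : ((p : ℤ) + q).toNat = p + q := by omega
  have hM : (((p : ℤ) + q - |(p : ℤ) - q|) / 2).toNat = min p q := by
    cases abs_cases ((p : ℤ) - q) <;> omega
  have hP : ((p : ℤ) - q + (p + q)) / 2 - 1 = p - 1 := by omega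
  have hQ : ((p : ℤ) + q - (p - q)) / 2 - 1 = q - 1 := by omega
  rw [am_eq_sum _ _ _ _ (by omega), hn, hM, hP, hQ]
  simp only [re_ofReal_mul, im_ofReal_mul, re_sum, im_sum, add_re, add_im, ofReal_re, ofReal_im,
    mul_I_re, mul_I_im, neg_zero, add_zero, zero_add]
  exact ⟨by rw [sum_pathCount_two_mul_add_one hp hq], by rw [sum_pathCount_two_mul hp hq]⟩

/-- "Explicit" formula for Feynman checkers with mass m and lattice step ε. -/
theorem explicit_formula_mass (m ε : ℝ) (hε : 0 < ε) (hm : 0 ≤ m) (x t : ℤ)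
    (hx : |x| < t) (hpar : Even (x + t)) :
    (am x t m ε).re = (1 + m ^ 2 * ε ^ 2) ^ (((1 : ℝ) - t) / 2) *
      ∑ r ∈ Finset.range (((t - |x|) / 2).toNat + 1),
        (-1 : ℝ) ^ r * intChoose ((x + t) / 2 - 1) r * intChoose ((t - x) / 2 - 1) r *
          (m * ε) ^ (2 * r + 1) ∧
    (am x t m ε).im = (1 + m ^ 2 * ε ^ 2) ^ (((1 : ℝ) - t) / 2) *
      ∑ r ∈ Finset.Icc 1 (((t - |x|) / 2).toNat),
        (-1 : ℝ) ^ r * intChoose ((x + t) / 2 - 1) r * intChoose ((t - x) / 2 - 1) ((r : ℤ) - 1) *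
          (m * ε) ^ (2 * r) :=
  explicit_formula_mass_general m ε x t hx hpar
end
end
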